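/- arXiv:1101.4830 — 4 statements merged into one kernel-verified Lean document; each statement's English description precedes it below -/
import Mathlib

section
/- Let d ≥ 2 and r be integers with 1 ≤ r ≤ d−1, and let l ≥ 1 and u ≥ 0 be integers. Then the following identity holds in ℚ: (∏_{k=2}^{r+1} (l+k−2)/(k−1)) · (∏_{k=r+2}^{d} (l+k−1)/(k−1)) · (∏_{j=2}^{r+1} ∏_{k=r+2}^{d} (k+1−j)/(k−j)) · ((u+l+d)/d) · (∏_{j=2}^{r+1} (u+d−j+2)/(d−j+1)) · (∏_{j=r+2}^{d} (u+d−j+1)/(d−j+1)) = (d·(u+l+d)/((l+r)·(u+d−r))) · C(l+d−1, d) · C(d−1, r) · C(u+d, d), where C(·,·) denotes the binomial coefficient and an empty product equals 1. -/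
open Finset

open Nat

private lemma prod_shift (a n : ℕ) (f : ℕ → ℚ) :
    ∏ k ∈ Icc (1 + a) (n + a), f k = ∏ i ∈ Icc 1 n, f (i + a) := by
  rw [← Finset.map_add_right_Icc, Finset.prod_map]
  rfl

private lemma prod_id_fact (n : ℕ) : (∏ i ∈ Icc 1 n, (i : ℚ)) = (n ! : ℚ) := by
  rw [← Nat.cast_prod]
  norm_cast
  rw [← Finset.Ico_add_one_right_eq_Icc, Finset.prod_Ico_id_eq_factorial]

private lemma prod_add_fact (c : ℕ) : ∀ n : ℕ,
    (∏ i ∈ Icc 1 n, ((c : ℚ) + i)) = ((c + n)! : ℚ) / (c ! : ℚ)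
  | 0 => by
    rw [Finset.Icc_eq_empty (by omega), Finset.prod_empty, Nat.add_zero]
    exact (div_self (by positivity)).symm
  | n + 1 => by
    rw [Finset.prod_Icc_succ_top (by omega), prod_add_fact c n,
      show c + (n + 1) = (c + n) + 1 by ring, Nat.factorial_succ]
    have h : (c ! : ℚ) ≠ 0 := by positivity
    push_cast
    field_simp
    ring

private lemma prod_sub_fact (c : ℕ) : ∀ n : ℕ, n < c →
    (∏ i ∈ Icc 1 n, ((c : ℚ) - i)) = ((c - 1)! : ℚ) / ((c - 1 - n)! : ℚ)
  | 0, _ => by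
    rw [Finset.Icc_eq_empty (by omega), Finset.prod_empty, Nat.sub_zero]
    exact (div_self (by positivity)).symm
  | n + 1, h => by
    rw [Finset.prod_Icc_succ_top (by omega), prod_sub_fact c n (by omega)]
    have e1 : c - 1 - n = (c - 1 - (n + 1)) + 1 := by omega
    have h2 : ((c - 1 - n : ℕ) : ℚ) = (c : ℚ) - n - 1 := by
      have e2 : c - 1 - n = c - (n + 1) := by omega
      rw [e2, Nat.cast_sub (by omega)]
      push_cast
      ring
    have key : ((c - 1 - n)! : ℚ) = ((c : ℚ) - n - 1) * ((c - 1 - (n + 1))! : ℚ) := by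
      rw [e1, Nat.factorial_succ, Nat.cast_mul]
      congr 1
      rw [← e1, h2]
    have h3 : (((c - 1 - (n + 1))!) : ℚ) ≠ 0 := by positivity
    have hne : (c : ℚ) - n - 1 ≠ 0 := by
      have hnn : c - 1 - n ≠ 0 := by omega
      rw [← h2]
      exact_mod_cast hnn
    rw [key]
    push_cast
    field_simp
    ring

private lemma prod_tel (j a : ℕ) (hj : j < a) : ∀ b : ℕ, a ≤ b + 1 →
    (∏ k ∈ Icc a b, ((k : ℚ) + 1 - j) / ((k : ℚ) - j)) = ((b : ℚ) + 1 - j) / ((a : ℚ) - j)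
  | 0, hb => by
    have ha : a = 1 := by omega
    have hj0 : j = 0 := by omega
    subst ha hj0
    simp
  | b + 1, hb => by
    rcases Nat.lt_or_ge (b + 1) a with hba | hba
    · have : a = b + 2 := by omega
      subst this
      rw [Finset.Icc_eq_empty (by omega), Finset.prod_empty]
      push_cast
      rw [eq_comm, div_eq_one_iff_eq] <;> [ring; skip]
      have : (j : ℚ) < (b : ℚ) + 2 := by exact_mod_cast (by omega : j < b + 2)
      intro hc; nlinarith
    · rw [Finset.prod_Icc_succ_top (by omega), prod_tel j a hj b hba]
      have h1 : (b : ℚ) + 1 - j ≠ 0 := by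
        have : (j : ℚ) < (b : ℚ) + 1 := by exact_mod_cast (by omega : j < b + 1)
        intro hc; nlinarith
      have h2 : (a : ℚ) - j ≠ 0 := by
        have : (j : ℚ) < (a : ℚ) := by exact_mod_cast hj
        intro hc; nlinarith
      push_cast
      field_simp

/-- Closed form of the Weyl character formula product for the first family, case `ε = 1`:
for integers `d ≥ 2`, `1 ≤ r ≤ d-1`, `l ≥ 1`, `u ≥ 0`,
`(∏_{k=2}^{r+1} (l+k-2)/(k-1)) * (∏_{k=r+2}^{d} (l+k-1)/(k-1)) *
 (∏_{j=2}^{r+1} ∏_{k=r+2}^{d} (k+1-j)/(k-j)) * ((u+l+d)/d) *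
 (∏_{j=2}^{r+1} (u+d-j+2)/(d-j+1)) * (∏_{j=r+2}^{d} (u+d-j+1)/(d-j+1))
  = (d (u+l+d))/((l+r)(u+d-r)) * C(l+d-1, d) * C(d-1, r) * C(u+d, d)`. -/
theorem weyl_product_first_family_eps_one (d r l u : ℕ)
    (hd : 2 ≤ d) (hr : 1 ≤ r) (hr' : r ≤ d - 1) (hl : 1 ≤ l) :
    (∏ k ∈ Icc 2 (r + 1), ((l : ℚ) + k - 2) / ((k : ℚ) - 1)) *
    (∏ k ∈ Icc (r + 2) d, ((l : ℚ) + k - 1) / ((k : ℚ) - 1)) *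
    (∏ j ∈ Icc 2 (r + 1), ∏ k ∈ Icc (r + 2) d, ((k : ℚ) + 1 - j) / ((k : ℚ) - j)) *
    (((u : ℚ) + l + d) / (d : ℚ)) *
    (∏ j ∈ Icc 2 (r + 1), ((u : ℚ) + d - j + 2) / ((d : ℚ) - j + 1)) *
    (∏ j ∈ Icc (r + 2) d, ((u : ℚ) + d - j + 1) / ((d : ℚ) - j + 1)) =
    ((d : ℚ) * ((u : ℚ) + l + d) / (((l : ℚ) + r) * ((u : ℚ) + d - r))) *
      ((l + d - 1).choose d : ℚ) * ((d - 1).choose r : ℚ) * ((u + d).choose d : ℚ) := by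
  have hrd : r + 1 ≤ d := by omega
  -- cast helpers
  have cl : ((l - 1 : ℕ) : ℚ) = (l : ℚ) - 1 := by
    push_cast [Nat.cast_sub hl]; ring
  have cudr : ((u + d - r : ℕ) : ℚ) = (u : ℚ) + d - r := by
    push_cast [Nat.cast_sub (show r ≤ u + d by omega)]; ring
  have cdr : ((d - r : ℕ) : ℚ) = (d : ℚ) - r := by
    push_cast [Nat.cast_sub (show r ≤ d by omega)]; ring
  -- reindexing equalities
  have eA : (Icc 2 (r + 1) : Finset ℕ) = Icc (1 + 1) (r + 1) := by norm_num
  have eB : (Icc (r + 2) d : Finset ℕ) = Icc (1 + (r + 1)) ((d - r - 1) + (r + 1)) := by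
    congr 1 <;> omega
  -- Product 1
  have hP1 : (∏ k ∈ Icc 2 (r + 1), ((l : ℚ) + k - 2) / ((k : ℚ) - 1)) =
      (((l - 1 + r)! : ℚ) / ((l - 1)! : ℚ)) / ((r ! : ℚ)) := by
    rw [eA, prod_shift]
    rw [Finset.prod_congr rfl (fun i _ => by
      show ((l : ℚ) + (↑(i + 1) : ℚ) - 2) / ((↑(i + 1) : ℚ) - 1)
          = (((l - 1 : ℕ) : ℚ) + (i : ℚ)) / (i : ℚ)
      rw [cl]; push_cast; ring_nf)]
    rw [Finset.prod_div_distrib, prod_add_fact, prod_id_fact]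
  -- Product 2
  have hP2 : (∏ k ∈ Icc (r + 2) d, ((l : ℚ) + k - 1) / ((k : ℚ) - 1)) =
      (((l + d - 1)! : ℚ) / ((l + r)! : ℚ)) / (((d - 1)! : ℚ) / ((r !) : ℚ)) := by
    rw [eB, prod_shift]
    rw [Finset.prod_congr rfl (fun i _ => by
      show ((l : ℚ) + (↑(i + (r + 1)) : ℚ) - 1) / ((↑(i + (r + 1)) : ℚ) - 1)
          = (((l + r : ℕ) : ℚ) + (i : ℚ)) / (((r : ℕ) : ℚ) + (i : ℚ))
      push_cast; ring_nf)]
    rw [Finset.prod_div_distrib, prod_add_fact, prod_add_fact,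
      show l + r + (d - r - 1) = l + d - 1 by omega,
      show r + (d - r - 1) = d - 1 by omega]
  -- Product 3
  have hP3 : (∏ j ∈ Icc 2 (r + 1), ∏ k ∈ Icc (r + 2) d, ((k : ℚ) + 1 - j) / ((k : ℚ) - j)) =
      (((d - 1)! : ℚ) / ((d - 1 - r)! : ℚ)) / ((r ! : ℚ)) := by
    have hinner : ∀ j ∈ Icc 2 (r + 1),
        (∏ k ∈ Icc (r + 2) d, ((k : ℚ) + 1 - j) / ((k : ℚ) - j))
          = ((d : ℚ) + 1 - j) / (((r + 2 : ℕ) : ℚ) - j) := by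
      intro j hj
      rw [Finset.mem_Icc] at hj
      exact prod_tel j (r + 2) (by omega) d (by omega)
    rw [Finset.prod_congr rfl hinner]
    rw [eA, prod_shift]
    rw [Finset.prod_congr rfl (fun i _ => by
      show ((d : ℚ) + 1 - (↑(i + 1) : ℚ)) / (((r + 2 : ℕ) : ℚ) - (↑(i + 1) : ℚ))
          = ((d : ℚ) - (i : ℚ)) / (((r + 1 : ℕ) : ℚ) - (i : ℚ))
      push_cast; ring_nf)]
    rw [Finset.prod_div_distrib, prod_sub_fact d r (by omega),
      prod_sub_fact (r + 1) r (by omega),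
      show r + 1 - 1 = r by omega, show r - r = 0 by omega]
    simp [Nat.factorial]
  -- Product 5
  have hP5 : (∏ j ∈ Icc 2 (r + 1), ((u : ℚ) + d - j + 2) / ((d : ℚ) - j + 1)) =
      (((u + d)! : ℚ) / ((u + d - r)! : ℚ)) / (((d - 1)! : ℚ) / ((d - 1 - r)! : ℚ)) := by
    rw [eA, prod_shift]
    rw [Finset.prod_congr rfl (fun i _ => by
      show ((u : ℚ) + d - (↑(i + 1) : ℚ) + 2) / ((d : ℚ) - (↑(i + 1) : ℚ) + 1)
          = (((u + d + 1 : ℕ) : ℚ) - (i : ℚ)) / ((d : ℚ) - (i : ℚ))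
      push_cast; ring_nf)]
    rw [Finset.prod_div_distrib, prod_sub_fact (u + d + 1) r (by omega),
      prod_sub_fact d r (by omega),
      show u + d + 1 - 1 = u + d by omega]
  -- Product 6
  have hP6 : (∏ j ∈ Icc (r + 2) d, ((u : ℚ) + d - j + 1) / ((d : ℚ) - j + 1)) =
      (((u + d - r - 1)! : ℚ) / ((u ! : ℚ))) / ((d - 1 - r)! : ℚ) := by
    rw [eB, prod_shift]
    rw [Finset.prod_congr rfl (fun i _ => by
      show ((u : ℚ) + d - (↑(i + (r + 1)) : ℚ) + 1) / ((d : ℚ) - (↑(i + (r + 1)) : ℚ) + 1)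
          = (((u + d - r : ℕ) : ℚ) - (i : ℚ)) / (((d - r : ℕ) : ℚ) - (i : ℚ))
      rw [cudr, cdr]; push_cast; ring_nf)]
    rw [Finset.prod_div_distrib, prod_sub_fact (u + d - r) (d - r - 1) (by omega),
      prod_sub_fact (d - r) (d - r - 1) (by omega),
      show u + d - r - 1 - (d - r - 1) = u by omega,
      show d - r - 1 - (d - r - 1) = 0 by omega,
      show d - r - 1 = d - 1 - r by omega]
    simp [Nat.factorial]
  rw [hP1, hP2, hP3, hP5, hP6]
  -- choose to factorials
  rw [Nat.cast_choose ℚ (show d ≤ l + d - 1 by omega),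
      Nat.cast_choose ℚ hr', Nat.cast_choose ℚ (show d ≤ u + d by omega),
      show l + d - 1 - d = l - 1 by omega, show u + d - d = u by omega]
  -- expand the shifted factorials
  rw [show (l + r)! = (l + r) * (l - 1 + r)! by
        rw [show l + r = (l - 1 + r) + 1 by omega, Nat.factorial_succ],
      show (u + d - r)! = (u + d - r) * (u + d - r - 1)! by
        rw [show u + d - r = (u + d - r - 1) + 1 by omega, Nat.factorial_succ,
          Nat.add_sub_cancel],
      show d ! = d * (d - 1)! by
        rw [show d = (d - 1) + 1 by omega, Nat.factorial_succ, Nat.add_sub_cancel]]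
  -- nonzeroness
  have n1 : ((l - 1)! : ℚ) ≠ 0 := by positivity
  have n2 : ((l - 1 + r)! : ℚ) ≠ 0 := by positivity
  have n4 : ((r !) : ℚ) ≠ 0 := by positivity
  have n5 : (((d - 1)!) : ℚ) ≠ 0 := by positivity
  have n6 : (((d - 1 - r)!) : ℚ) ≠ 0 := by positivity
  have n8 : (((u + d - r - 1)!) : ℚ) ≠ 0 := by positivity
  have n9 : ((u !) : ℚ) ≠ 0 := by positivity
  have nd : (d : ℚ) ≠ 0 := by positivity
  have nlr : (l : ℚ) + r ≠ 0 := by positivity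
  have nudr : (u : ℚ) + d - r ≠ 0 := by
    have hnn : u + d - r ≠ 0 := by omega
    rw [← cudr]
    exact_mod_cast hnn
  push_cast [cudr, cl]
  field_simp
end

section
/- Let d < n be odd positive integers and let S := G1 ∪ G2 ∪ G3 ⊆ ℤ, where G1 := {2(r+l)(2d+1−n+2(s+l−ε)) : r,s,ε,l ∈ ℤ, 1 ≤ r ≤ d−1, 0 ≤ s ≤ n−d, 0 ≤ ε ≤ 1, l ≥ ε, l ≥ (n+1)/2 − r − s}, G2 := {4l(l+s+d−(n+1)/2) : s,l ∈ ℤ, 0 ≤ s ≤ n−d, l ≥ 0, l ≥ (n+1)/2 − s}, and G3 := {2(d+l)(2d−n+1+2(l+s)) : s,l ∈ ℤ, 0 ≤ s ≤ n−d, l ≥ 0, l ≥ (n−1)/2 − d − s}. If 2d ≤ n−1 then 0 is the least element of S (0 ∈ S and 0 ≤ x for all x ∈ S); if 2d ≥ n+1 then (n+1)(2d+1−n) is the least element of S. -/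
/-- For odd positive integers `d < n`, let `S = G1 ∪ G2 ∪ G3` be the union of the three
families of eigenvalues of the squared twisted Dirac operator of `ℂP^d ⊆ ℂP^n`.
If `2d ≤ n-1` then `0` is the least element of `S`; if `2d ≥ n+1` then
`(n+1)(2d+1-n)` is the least element of `S`. -/
theorem lowest_twisted_dirac_eigenvalue (d n : ℤ)
    (hd : 1 ≤ d) (hdodd : Odd d) (hnodd : Odd n) (hdn : d < n)
    (G1 G2 G3 S : Set ℤ)
    (hG1 : G1 = {x | ∃ r s ε l : ℤ, 1 ≤ r ∧ r ≤ d - 1 ∧ 0 ≤ s ∧ s ≤ n - d ∧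
      0 ≤ ε ∧ ε ≤ 1 ∧ ε ≤ l ∧ (n + 1) / 2 - r - s ≤ l ∧
      x = 2 * (r + l) * (2 * d + 1 - n + 2 * (s + l - ε))})
    (hG2 : G2 = {x | ∃ s l : ℤ, 0 ≤ s ∧ s ≤ n - d ∧ 0 ≤ l ∧ (n + 1) / 2 - s ≤ l ∧
      x = 4 * l * (l + s + d - (n + 1) / 2)})
    (hG3 : G3 = {x | ∃ s l : ℤ, 0 ≤ s ∧ s ≤ n - d ∧ 0 ≤ l ∧ (n - 1) / 2 - d - s ≤ l ∧
      x = 2 * (d + l) * (2 * d - n + 1 + 2 * (l + s))})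
    (hS : S = G1 ∪ G2 ∪ G3) :
    (2 * d ≤ n - 1 → IsLeast S 0) ∧
    (n + 1 ≤ 2 * d → IsLeast S ((n + 1) * (2 * d + 1 - n))) := by
  obtain ⟨k, hk⟩ := hnodd
  subst hk hS hG1 hG2 hG3
  have hdiv : (2 * k + 1 + 1) / 2 = k + 1 := by omega
  constructor
  · intro hcase
    constructor
    · simp only [Set.mem_union, Set.mem_setOf_eq]
      refine Or.inl (Or.inr ⟨(2 * k + 1 + 1) / 2, 0, by omega, by omega, le_refl 0,
        by omega, by ring⟩)
    · rintro x hx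
      simp only [Set.mem_union, Set.mem_setOf_eq] at hx
      obtain (⟨r, s, e, l, h1, h2, h3, h4, h5, h6, h7, h8, hx⟩ |
        ⟨s, l, h1, h2, h3, h4, hx⟩) | ⟨s, l, h1, h2, h3, h4, hx⟩ := hx <;> subst hx
      · nlinarith [mul_nonneg (show (0:ℤ) ≤ r + l by omega)
          (show (0:ℤ) ≤ 2 * d + 1 - (2 * k + 1) + 2 * (s + l - e) by omega)]
      · nlinarith [mul_nonneg (show (0:ℤ) ≤ l by omega)
          (show (0:ℤ) ≤ l + s + d - (2 * k + 1 + 1) / 2 by omega)]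
      · nlinarith [mul_nonneg (show (0:ℤ) ≤ d + l by omega)
          (show (0:ℤ) ≤ 2 * d - (2 * k + 1) + 1 + 2 * (l + s) by omega)]
  · intro hcase
    constructor
    · simp only [Set.mem_union, Set.mem_setOf_eq]
      obtain ⟨j, hj⟩ := hdodd
      refine Or.inl (Or.inl ⟨k, 0, 1, 1, by omega, by omega, le_refl 0, by omega,
        by omega, by omega, by omega, by omega, by ring⟩)
    · rintro x hx
      simp only [Set.mem_union, Set.mem_setOf_eq] at hx
      obtain (⟨r, s, e, l, h1, h2, h3, h4, h5, h6, h7, h8, hx⟩ |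
        ⟨s, l, h1, h2, h3, h4, hx⟩) | ⟨s, l, h1, h2, h3, h4, hx⟩ := hx <;> subst hx
      · -- G1 case
        have key : (k + 1) * (d - k) ≤ (r + l) * (d - k + (s + l - e)) := by
          rcases le_or_gt (k + 1) (r + l) with hu | hu
          · exact mul_le_mul hu (by omega) (by omega) (by omega)
          · have hB : d + 1 - (r + l) ≤ d - k + (s + l - e) := by omega
            have p1 : 0 ≤ (k + 1 - (r + l)) * ((r + l) - (d - k)) :=
              mul_nonneg (by omega) (by omega)
            have p2 : (r + l) * (d + 1 - (r + l)) ≤ (r + l) * (d - k + (s + l - e)) :=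
              mul_le_mul_of_nonneg_left hB (by omega)
            nlinarith [p1, p2]
        nlinarith [key]
      · -- G2 case
        rw [hdiv]
        have key : (d - k) * (k + 1) ≤ l * (l + s + d - (k + 1)) :=
          mul_le_mul (by omega) (by omega) (by omega) (by omega)
        nlinarith [key]
      · -- G3 case
        have key : (k + 1) * (d - k) ≤ (d + l) * (d - k + (l + s)) :=
          mul_le_mul (by omega) (by omega) (by omega) (by omega)
        nlinarith [key]
end

section
/- Let d < n be odd positive integers with d ≥ 3, and let G1 := {2(r+l)(2d+1−n+2(s+l−ε)) : r,s,ε,l ∈ ℤ, 1 ≤ r ≤ d−1, 0 ≤ s ≤ n−d, 0 ≤ ε ≤ 1, l ≥ ε, l ≥ (n+1)/2 − r − s} ⊆ ℤ. If 2d ≤ n+1 then 4d is the least element of G1 (4d ∈ G1 and 4d ≤ x for all x ∈ G1); if 2d > n+1 then (n+1)(2d+1−n) is the least element of G1. -/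
/-- Lower bound lemma: with `a = r+l ≥ 1`, `b = c+s+l-ε ≥ 1`, `a ≥ p`, `b ≥ q`,
we bound the product. -/
theorem aux_prod_lb (a b p q d : ℤ) (ha : 1 ≤ a) (hb : 1 ≤ b)
    (hap : p ≤ a) (hbq : q ≤ b) (hpq : p + q = d + 1) : d ≤ a * b := by
  rcases le_or_gt q 0 with hq | hq
  · -- p ≥ d+1, a ≥ d+1, b ≥ 1
    nlinarith [mul_le_mul hap hb (by norm_num) (by linarith : (0:ℤ) ≤ a)]
  rcases le_or_gt p 0 with hp | hp
  · nlinarith [mul_le_mul ha hbq (by linarith) (by linarith : (0:ℤ) ≤ a)]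
  · have h1 : p * q ≤ a * b := mul_le_mul hap hbq (by linarith) (by linarith)
    nlinarith [(p - 1) * (q - 1)]

/-- For odd positive integers `d < n` with `d ≥ 3`, let `G1` be the first family of
eigenvalues of the squared twisted Dirac operator of `ℂP^d ⊆ ℂP^n`.
If `2d ≤ n+1` then `4d` is the least element of `G1`; if `2d > n+1` then
`(n+1)(2d+1-n)` is the least element of `G1`. -/
theorem lowest_first_family_eigenvalue (d n : ℤ)
    (hd : 3 ≤ d) (hdodd : Odd d) (hnodd : Odd n) (hdn : d < n)
    (G1 : Set ℤ)
    (hG1 : G1 = {x | ∃ r s ε l : ℤ, 1 ≤ r ∧ r ≤ d - 1 ∧ 0 ≤ s ∧ s ≤ n - d ∧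
      0 ≤ ε ∧ ε ≤ 1 ∧ ε ≤ l ∧ (n + 1) / 2 - r - s ≤ l ∧
      x = 2 * (r + l) * (2 * d + 1 - n + 2 * (s + l - ε))}) :
    (2 * d ≤ n + 1 → IsLeast G1 (4 * d)) ∧
    (n + 1 < 2 * d → IsLeast G1 ((n + 1) * (2 * d + 1 - n))) := by
  obtain ⟨k, hk⟩ := hnodd
  subst hk
  subst hG1
  constructor
  · intro hcase
    constructor
    · -- membership: r = d-1, s = k+1-d, ε = 1, l = 1
      refine ⟨d - 1, k + 1 - d, 1, 1, by omega, by omega, by omega, by omega,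
        by omega, by omega, by omega, by omega, by ring⟩
    · rintro x ⟨r, s, ε, l, h1, h2, h3, h4, h5, h6, h7, h8, hx⟩
      have hx' : x = 4 * ((r + l) * ((d - k) + s + l - ε)) := by
        rw [hx]; ring
      have key : d ≤ (r + l) * ((d - k) + s + l - ε) := by
        apply aux_prod_lb _ _ (k + 1 - s) ((d - k) + s) d <;> omega
      omega
  · intro hcase
    constructor
    · -- membership: r = k, s = 0, ε = 1, l = 1
      refine ⟨k, 0, 1, 1, by omega, by omega, by omega, by omega,
        by omega, by omega, by omega, by omega, by ring⟩
    · rintro x ⟨r, s, ε, l, h1, h2, h3, h4, h5, h6, h7, h8, hx⟩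
      have hx' : x = 4 * ((r + l) * ((d - k) + s + l - ε)) := by
        rw [hx]; ring
      have ha : 1 ≤ r + l := by omega
      have hb : 1 ≤ (d - k) + s + l - ε := by omega
      have hap : k + 1 - s ≤ r + l := by omega
      have hbq : (d - k) + s ≤ (d - k) + s + l - ε := by omega
      -- p = k+1-s ∈ [d-k, k+1], q = (d-k)+s, p+q = d+1
      have hpb : k + 1 - s ≤ k + 1 := by omega
      have hpc : d - k ≤ k + 1 - s := by omega
      have h1' : (k + 1 - s) * ((d - k) + s) ≤ (r + l) * ((d - k) + s + l - ε) :=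
        mul_le_mul hap hbq (by omega) (by omega)
      have h2' : (k + 1) * (d - k) ≤ (k + 1 - s) * ((d - k) + s) := by
        nlinarith [(k + 1 - s - (d - k)) * (k + 1 - (k + 1 - s))]
      have : (2*k+1 + 1) * (2 * d + 1 - (2*k+1)) = 4 * ((k + 1) * (d - k)) := by ring
      nlinarith
end

section
/- Let d < n be odd positive integers and let G2 := {4l(l+s+d−(n+1)/2) : s,l ∈ ℤ, 0 ≤ s ≤ n−d, l ≥ 0, l ≥ (n+1)/2 − s} ⊆ ℤ. If 2d ≤ n−1 then 0 is the least element of G2 (0 ∈ G2 and 0 ≤ x for all x ∈ G2); if 2d ≥ n+1 then 2d(2d+1−n) is the least element of G2. -/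
/-- For odd positive integers `d < n`, let `G2` be the second family of eigenvalues of
the squared twisted Dirac operator of `ℂP^d ⊆ ℂP^n`.  If `2d ≤ n-1` then `0` is the
least element of `G2`; if `2d ≥ n+1` then `2d(2d+1-n)` is the least element of `G2`. -/
theorem lowest_second_family_eigenvalue (d n : ℤ)
    (hd : 1 ≤ d) (hdodd : Odd d) (hnodd : Odd n) (hdn : d < n)
    (G2 : Set ℤ)
    (hG2 : G2 = {x | ∃ s l : ℤ, 0 ≤ s ∧ s ≤ n - d ∧ 0 ≤ l ∧ (n + 1) / 2 - s ≤ l ∧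
      x = 4 * l * (l + s + d - (n + 1) / 2)}) :
    (2 * d ≤ n - 1 → IsLeast G2 0) ∧
    (n + 1 ≤ 2 * d → IsLeast G2 (2 * d * (2 * d + 1 - n))) := by
  subst hG2
  obtain ⟨k, hk⟩ := hnodd
  have hm : (n + 1) / 2 = k + 1 := by omega
  constructor
  · intro h
    constructor
    · exact ⟨(n + 1) / 2, 0, by omega, by omega, le_refl 0, by omega, by ring⟩
    · rintro x ⟨s, l, hs0, hs1, hl0, hl1, rfl⟩
      have h2 : 0 ≤ l + s + d - (n + 1) / 2 := by omega
      nlinarith [mul_nonneg hl0 h2]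
  · intro h
    constructor
    · refine ⟨n - d, d - (n + 1) / 2 + 1, by omega, by omega, by omega, by omega, ?_⟩
      rw [hm]; subst hk; ring
    · rintro x ⟨s, l, hs0, hs1, hl0, hl1, rfl⟩
      have h1 : d - (n + 1) / 2 + 1 ≤ l := by omega
      have h2 : d ≤ l + s + d - (n + 1) / 2 := by omega
      have h3 : 0 ≤ d - (n + 1) / 2 + 1 := by omega
      have hkey := mul_le_mul h1 h2 (by omega) (le_trans h3 h1)
      rw [hm] at *
      nlinarith [hkey]
end
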